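/- arXiv:1301.0489 — 5 statements merged into one kernel-verified Lean document; each statement's English description precedes it below -/
import Mathlib

section
/- Let $U_1, U_2, U_3$ be subspaces of a vector space $V$, let $U = U_1 \times U_2 \times U_3 \subseteq V \times V \times V$, and let $Y = \{(v,v,v) : v \in V\}$ be the diagonal. Then $V \times V \times V = U + Y$ if and only if $V = U_1 + (U_2 \cap U_3)$, $V = U_2 + (U_3 \cap U_1)$, and $V = U_3 + (U_1 \cap U_2)$. -/
/-! A triple `(x, y, z)` lies in `U₁ × U₂ × U₃ + diag(V)` iff a single shift `t` moves `x, y, z`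
into `U₁, U₂, U₃` respectively. Taking `(v, 0, 0)` shows that this forces
`v ∈ U₁ + (U₂ ∩ U₃)`, and conversely shifts `t₁ ∈ U₂ ∩ U₃`, `t₂ ∈ U₃ ∩ U₁`, `t₃ ∈ U₁ ∩ U₂`
adapted to `x`, `y`, `z` separately add up to one shift `t₁ + t₂ + t₃` that works for all three. -/

namespace Submodule

variable {R M N : Type*} [Ring R] [AddCommGroup M] [Module R M] [AddCommGroup N] [Module R N]

theorem mem_sup_iff_exists_add_mem {A W : Submodule R M} {v : M} :
    v ∈ A ⊔ W ↔ ∃ t ∈ W, v + t ∈ A := by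
  rw [mem_sup]
  constructor
  · rintro ⟨a, ha, w, hw, rfl⟩
    exact ⟨-w, neg_mem hw, by simpa using ha⟩
  · rintro ⟨t, ht, hvt⟩
    exact ⟨v + t, hvt, -t, neg_mem ht, by abel⟩

theorem mem_sup_range_iff {S : Submodule R M} {f : N →ₗ[R] M} {m : M} :
    m ∈ S ⊔ LinearMap.range f ↔ ∃ n, m + f n ∈ S := by
  simp [mem_sup_iff_exists_add_mem]

theorem sup_inf_eq_top_iff {A B C : Submodule R M} :
    A ⊔ (B ⊓ C) = ⊤ ↔ ∀ v, ∃ t, v + t ∈ A ∧ t ∈ B ∧ t ∈ C := by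
  simp only [eq_top_iff', mem_sup_iff_exists_add_mem, mem_inf]
  exact forall_congr' fun v => ⟨fun ⟨t, ⟨hB, hC⟩, hA⟩ => ⟨t, hA, hB, hC⟩,
    fun ⟨t, hA, hB, hC⟩ => ⟨t, ⟨hB, hC⟩, hA⟩⟩

theorem prod_sup_range_diag_eq_top_iff (U₁ U₂ U₃ : Submodule R M) :
    U₁.prod (U₂.prod U₃) ⊔
        LinearMap.range ((LinearMap.id : M →ₗ[R] M).prod (LinearMap.id.prod LinearMap.id)) = ⊤ ↔
      ∀ x y z : M, ∃ t, x + t ∈ U₁ ∧ y + t ∈ U₂ ∧ z + t ∈ U₃ := by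
  simp [eq_top_iff', mem_sup_range_iff]

end Submodule

open Submodule in
/-- Lemma on three subspaces: `V³ = (U₁ × U₂ × U₃) + diag(V)` iff
`V = U₁ + (U₂ ∩ U₃) = U₂ + (U₃ ∩ U₁) = U₃ + (U₁ ∩ U₂)`. -/
theorem stmt0 {K V : Type*} [Field K] [AddCommGroup V] [Module K V]
    (U₁ U₂ U₃ : Submodule K V) :
    (U₁.prod (U₂.prod U₃)) ⊔
        LinearMap.range ((LinearMap.id : V →ₗ[K] V).prod
          ((LinearMap.id : V →ₗ[K] V).prod (LinearMap.id : V →ₗ[K] V))) = ⊤ ↔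
      (U₁ ⊔ (U₂ ⊓ U₃) = ⊤ ∧ U₂ ⊔ (U₃ ⊓ U₁) = ⊤ ∧ U₃ ⊔ (U₁ ⊓ U₂) = ⊤) := by
  simp only [prod_sup_range_diag_eq_top_iff, sup_inf_eq_top_iff]
  constructor
  · intro h
    refine ⟨fun v => ?_, fun v => ?_, fun v => ?_⟩
    · obtain ⟨t, h₁, h₂, h₃⟩ := h v 0 0
      exact ⟨t, h₁, by simpa using h₂, by simpa using h₃⟩
    · obtain ⟨t, h₁, h₂, h₃⟩ := h 0 v 0
      exact ⟨t, h₂, by simpa using h₃, by simpa using h₁⟩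
    · obtain ⟨t, h₁, h₂, h₃⟩ := h 0 0 v
      exact ⟨t, h₃, by simpa using h₁, by simpa using h₂⟩
  · rintro ⟨h₁, h₂, h₃⟩ x y z
    obtain ⟨t₁, hx, ht₁₂, ht₁₃⟩ := h₁ x
    obtain ⟨t₂, hy, ht₂₃, ht₂₁⟩ := h₂ y
    obtain ⟨t₃, hz, ht₃₁, ht₃₂⟩ := h₃ z
    refine ⟨t₁ + t₂ + t₃, ?_, ?_, ?_⟩
    · convert add_mem (add_mem hx ht₂₁) ht₃₁ using 1; abel
    · convert add_mem (add_mem hy ht₁₂) ht₃₂ using 1; abel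
    · convert add_mem (add_mem hz ht₁₃) ht₂₃ using 1; abel
end

section
/- Let $\ell_1, \ell_2, \ell_3$ be lines through the origin in $\mathbb{R}^n$. If for every triple of points $z_1, z_2, z_3 \in \mathbb{R}^n$ there exists a rigid motion $g$ of $\mathbb{R}^n$ with $g(z_j) \in \ell_j$ for $j = 1, 2, 3$, then $\dim(\ell_1 + \ell_2 + \ell_3) \le 2$. -/
/-!
If the three lines spanned a space of dimension 3, they would be independent, so a relation
`p₁ + p₂ + p₃ = 0` with `pⱼ ∈ ℓⱼ` forces every `pⱼ = 0`. Apply the hypothesis to the collinear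
triple `0, v, 2v` with `v ≠ 0`: by Mazur–Ulam a rigid motion `g` is affine, so
`g 0 - 2 • g v + g (2 • v) = 0` is such a relation, whence `g 0 = g v = 0`, contradicting the
injectivity of `g`.
-/

open Module

namespace Submodule

variable {K V : Type*} [DivisionRing K] [AddCommGroup V] [Module K V]

theorem disjoint_of_finrank_add_le {p q : Submodule K V} [FiniteDimensional K p]
    [FiniteDimensional K q] (hpq : finrank K p + finrank K q ≤ finrank K ↥(p ⊔ q)) :
    Disjoint p q := by
  have hinf := finrank_sup_add_finrank_inf_eq p q
  rw [disjoint_iff, ← finrank_eq_zero (R := K)]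
  omega

theorem disjoint_sup_and_disjoint_of_finrank_add_add_le {p q r : Submodule K V}
    [FiniteDimensional K p] [FiniteDimensional K q] [FiniteDimensional K r]
    (hpqr : finrank K p + finrank K q + finrank K r ≤ finrank K ↥(p ⊔ q ⊔ r)) :
    Disjoint p (q ⊔ r) ∧ Disjoint q r := by
  rw [sup_assoc] at hpqr
  have hp := finrank_add_le_finrank_add_finrank p (q ⊔ r)
  have hq := finrank_add_le_finrank_add_finrank q r
  exact ⟨disjoint_of_finrank_add_le (by omega), disjoint_of_finrank_add_le (by omega)⟩

theorem eq_zero_of_add_add_eq_zero {p q r : Submodule K V} (hp : Disjoint p (q ⊔ r))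
    (hq : Disjoint q r) {x y z : V} (hx : x ∈ p) (hy : y ∈ q) (hz : z ∈ r)
    (hxyz : x + y + z = 0) : x = 0 ∧ y = 0 ∧ z = 0 := by
  have hx0 : x = 0 := by
    refine disjoint_def.mp hp x hx ?_
    rw [eq_neg_of_add_eq_zero_left (show x + (y + z) = 0 by rwa [← add_assoc])]
    exact neg_mem (add_mem_sup hy hz)
  subst hx0
  have hy0 : y = 0 := by
    refine disjoint_def.mp hq y hy ?_
    rw [eq_neg_of_add_eq_zero_left (show y + z = 0 by rwa [zero_add] at hxyz)]
    exact neg_mem hz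
  subst hy0
  exact ⟨rfl, rfl, by simpa using hxyz⟩

end Submodule

theorem IsometryEquiv.map_zero_add_map_two_smul {E F : Type*} [NormedAddCommGroup E]
    [NormedSpace ℝ E] [NormedAddCommGroup F] [NormedSpace ℝ F] (g : E ≃ᵢ F) (v : E) :
    g 0 + g ((2 : ℝ) • v) = (2 : ℝ) • g v := by
  have hv : midpoint ℝ (0 : E) ((2 : ℝ) • v) = v := by
    rw [midpoint_eq_smul_add, zero_add, smul_smul]
    norm_num
  rw [← midpoint_add_self (R := ℝ), ← g.map_midpoint, hv, two_smul]

/-- If every triple of points of `ℝⁿ` can be moved by a rigid motion so that the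
`j`-th point lands on the line `ℓⱼ` through the origin, then the three lines span
a subspace of dimension at most `2`. -/
theorem stmt2 {n : ℕ}
    (ℓ₁ ℓ₂ ℓ₃ : Submodule ℝ (EuclideanSpace ℝ (Fin n)))
    (h₁ : Module.finrank ℝ ℓ₁ = 1) (h₂ : Module.finrank ℝ ℓ₂ = 1)
    (h₃ : Module.finrank ℝ ℓ₃ = 1)
    (h : ∀ z₁ z₂ z₃ : EuclideanSpace ℝ (Fin n),
      ∃ g : EuclideanSpace ℝ (Fin n) ≃ᵢ EuclideanSpace ℝ (Fin n),
        g z₁ ∈ ℓ₁ ∧ g z₂ ∈ ℓ₂ ∧ g z₃ ∈ ℓ₃) :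
    Module.finrank ℝ ↥(ℓ₁ ⊔ ℓ₂ ⊔ ℓ₃) ≤ 2 := by
  by_contra! hgt
  have hdim : Module.finrank ℝ ℓ₁ + Module.finrank ℝ ℓ₂ + Module.finrank ℝ ℓ₃ ≤
      Module.finrank ℝ ↥(ℓ₁ ⊔ ℓ₂ ⊔ ℓ₃) := by omega
  obtain ⟨hdisj₁, hdisj₂⟩ := Submodule.disjoint_sup_and_disjoint_of_finrank_add_add_le hdim
  obtain ⟨v, -, hv⟩ := Submodule.exists_mem_ne_zero_of_ne_bot (p := ℓ₁) (by rintro rfl; simp at h₁)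
  obtain ⟨g, hg₁, hg₂, hg₃⟩ := h 0 v ((2 : ℝ) • v)
  obtain ⟨hg0, hgv, -⟩ := Submodule.eq_zero_of_add_add_eq_zero hdisj₁ hdisj₂ hg₁
    (ℓ₂.neg_mem (ℓ₂.smul_mem 2 hg₂)) hg₃
    (by rw [add_right_comm, g.map_zero_add_map_two_smul, add_neg_cancel])
  have hgv0 : g v = 0 := by simpa using hgv
  exact hv (g.injective (hgv0.trans hg0.symm))
end

section
/- Let $\ell_1, \ell_2, \ell_3$ be lines through the origin in $\mathbb{R}^2$ (not all necessarily distinct). Then for every triple of points $z_1, z_2, z_3 \in \mathbb{R}^2$, provided the three lines do not all coincide, there exists a rigid motion $g$ of $\mathbb{R}^2$ with $g(z_j) \in \ell_j$ for $j = 1, 2, 3$. -/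
/-!
Identify `ℝ²` with `ℂ`, so that the rigid motions include `z ↦ w * z + b` with `|w| = 1`.
The conditions `w * zⱼ + b ∈ ℓⱼ` are three real linear equations in the four real unknowns
`(w, b) ∈ ℂ × ℂ`, so they have a nonzero solution. In it `w ≠ 0`, since otherwise `b ≠ 0` would
lie on all three lines, which meet only at the origin when two of them differ. Dividing the
solution by `|w|` gives a rigid motion.
-/

open Module

theorem Submodule.inf_eq_bot_of_finrank_eq_one {K V : Type*} [DivisionRing K] [AddCommGroup V]
    [Module K V] {p q : Submodule K V} (hp : finrank K p = 1) (hq : finrank K q = 1)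
    (hpq : p ≠ q) : p ⊓ q = ⊥ := by
  have : FiniteDimensional K p := Module.finite_of_finrank_eq_succ hp
  have : FiniteDimensional K q := Module.finite_of_finrank_eq_succ hq
  by_contra hne
  have hpos : 1 ≤ finrank K ↥(p ⊓ q) := Submodule.one_le_finrank_iff.2 hne
  have hp' : p ⊓ q = p := Submodule.eq_of_le_of_finrank_le inf_le_left (hp ▸ hpos)
  have hq' : p ⊓ q = q := Submodule.eq_of_le_of_finrank_le inf_le_right (hq ▸ hpos)
  exact hpq (hp'.symm.trans hq')

theorem Submodule.inf_inf_eq_bot_of_finrank_eq_one {K V : Type*} [DivisionRing K]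
    [AddCommGroup V] [Module K V] {p q r : Submodule K V} (hp : finrank K p = 1)
    (hq : finrank K q = 1) (hr : finrank K r = 1) (hpqr : ¬ (p = q ∧ q = r)) :
    p ⊓ q ⊓ r = ⊥ := by
  rcases not_and_or.1 hpqr with hpq | hqr
  · rw [inf_eq_bot_of_finrank_eq_one hp hq hpq, bot_inf_eq]
  · rw [inf_assoc, inf_eq_bot_of_finrank_eq_one hq hr hqr, inf_bot_eq]

namespace Complex

theorem exists_ne_zero_mul_add_mem_of_finrank_eq_one {ℓ₁ ℓ₂ ℓ₃ : Submodule ℝ ℂ}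
    (h₁ : finrank ℝ ℓ₁ = 1) (h₂ : finrank ℝ ℓ₂ = 1) (h₃ : finrank ℝ ℓ₃ = 1) (z₁ z₂ z₃ : ℂ) :
    ∃ w b : ℂ, (w, b) ≠ 0 ∧ w * z₁ + b ∈ ℓ₁ ∧ w * z₂ + b ∈ ℓ₂ ∧ w * z₃ + b ∈ ℓ₃ := by
  let condition (ℓ : Submodule ℝ ℂ) (z : ℂ) : ℂ × ℂ →ₗ[ℝ] ℂ ⧸ ℓ :=
    ℓ.mkQ ∘ₗ (LinearMap.mulRight ℝ z).coprod LinearMap.id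
  have finrank_quotient {ℓ : Submodule ℝ ℂ} (h : finrank ℝ ℓ = 1) : finrank ℝ (ℂ ⧸ ℓ) = 1 := by
    have := ℓ.finrank_quotient_add_finrank
    rw [h, finrank_real_complex] at this
    omega
  have hdim : finrank ℝ ((ℂ ⧸ ℓ₁) × (ℂ ⧸ ℓ₂) × (ℂ ⧸ ℓ₃)) < finrank ℝ (ℂ × ℂ) := by
    simp only [finrank_prod, finrank_quotient h₁, finrank_quotient h₂, finrank_quotient h₃,
      finrank_real_complex]
    omega
  obtain ⟨⟨w, b⟩, hker, hwb⟩ := Submodule.exists_mem_ne_zero_of_ne_bot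
    (LinearMap.ker_ne_bot_of_finrank_lt (f := (condition ℓ₁ z₁).prod
      ((condition ℓ₂ z₂).prod (condition ℓ₃ z₃))) hdim)
  simp only [condition, LinearMap.mem_ker, LinearMap.prod_apply, Function.prod_apply,
    LinearMap.coe_comp, Function.comp_apply, LinearMap.coprod_apply, LinearMap.mulRight_apply,
    LinearMap.id_apply, Submodule.mkQ_apply, Submodule.Quotient.mk_eq_zero, Prod.mk_eq_zero] at hker
  exact ⟨w, b, hwb, hker⟩

theorem exists_circle_mul_add_mem_of_finrank_eq_one {ℓ₁ ℓ₂ ℓ₃ : Submodule ℝ ℂ}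
    (h₁ : finrank ℝ ℓ₁ = 1) (h₂ : finrank ℝ ℓ₂ = 1) (h₃ : finrank ℝ ℓ₃ = 1)
    (hℓ : ℓ₁ ⊓ ℓ₂ ⊓ ℓ₃ = ⊥) (z₁ z₂ z₃ : ℂ) :
    ∃ (w : Circle) (b : ℂ), w * z₁ + b ∈ ℓ₁ ∧ w * z₂ + b ∈ ℓ₂ ∧ w * z₃ + b ∈ ℓ₃ := by
  obtain ⟨w, b, hwb, hz₁, hz₂, hz₃⟩ :=
    exists_ne_zero_mul_add_mem_of_finrank_eq_one h₁ h₂ h₃ z₁ z₂ z₃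
  have hw : w ≠ 0 := by
    rintro rfl
    simp only [zero_mul, zero_add] at hz₁ hz₂ hz₃
    have hb : b ∈ ℓ₁ ⊓ ℓ₂ ⊓ ℓ₃ := ⟨⟨hz₁, hz₂⟩, hz₃⟩
    rw [hℓ, Submodule.mem_bot] at hb
    exact hwb (Prod.ext rfl hb)
  have hnorm : ‖w‖ ≠ 0 := norm_ne_zero_iff.2 hw
  have scale {ℓ : Submodule ℝ ℂ} {z : ℂ} (h : w * z + b ∈ ℓ) :
      (w / ‖w‖) * z + b / ‖w‖ ∈ ℓ := by
    convert ℓ.smul_mem ‖w‖⁻¹ h using 1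
    rw [real_smul]
    push_cast
    ring
  exact ⟨⟨w / ‖w‖, mem_sphere_zero_iff_norm.2 (by simp [hnorm])⟩, b / ‖w‖,
    scale hz₁, scale hz₂, scale hz₃⟩

theorem exists_isometryEquiv_mem_of_finrank_eq_one {ℓ₁ ℓ₂ ℓ₃ : Submodule ℝ ℂ}
    (h₁ : finrank ℝ ℓ₁ = 1) (h₂ : finrank ℝ ℓ₂ = 1) (h₃ : finrank ℝ ℓ₃ = 1)
    (hne : ¬ (ℓ₁ = ℓ₂ ∧ ℓ₂ = ℓ₃)) (z₁ z₂ z₃ : ℂ) :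
    ∃ g : ℂ ≃ᵢ ℂ, g z₁ ∈ ℓ₁ ∧ g z₂ ∈ ℓ₂ ∧ g z₃ ∈ ℓ₃ := by
  obtain ⟨w, b, hz⟩ := exists_circle_mul_add_mem_of_finrank_eq_one h₁ h₂ h₃
    (Submodule.inf_inf_eq_bot_of_finrank_eq_one h₁ h₂ h₃ hne) z₁ z₂ z₃
  exact ⟨(rotation w).toIsometryEquiv.trans (IsometryEquiv.addRight b), hz⟩

end Complex

/-- If the three lines through the origin in `ℝ²` do not all coincide, then every
triple of points can be moved by a rigid motion so that the `j`-th point lands on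
the line `ℓⱼ`. -/
theorem stmt3 (ℓ₁ ℓ₂ ℓ₃ : Submodule ℝ (EuclideanSpace ℝ (Fin 2)))
    (h₁ : Module.finrank ℝ ℓ₁ = 1) (h₂ : Module.finrank ℝ ℓ₂ = 1)
    (h₃ : Module.finrank ℝ ℓ₃ = 1)
    (hne : ¬ (ℓ₁ = ℓ₂ ∧ ℓ₂ = ℓ₃)) :
    ∀ z₁ z₂ z₃ : EuclideanSpace ℝ (Fin 2),
      ∃ g : EuclideanSpace ℝ (Fin 2) ≃ᵢ EuclideanSpace ℝ (Fin 2),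
        g z₁ ∈ ℓ₁ ∧ g z₂ ∈ ℓ₂ ∧ g z₃ ∈ ℓ₃ := by
  intro z₁ z₂ z₃
  let e : ℂ ≃ₗᵢ[ℝ] EuclideanSpace ℝ (Fin 2) := Complex.orthonormalBasisOneI.repr
  let toℂ (ℓ : Submodule ℝ (EuclideanSpace ℝ (Fin 2))) : Submodule ℝ ℂ :=
    ℓ.map (e.symm.toLinearEquiv : EuclideanSpace ℝ (Fin 2) →ₗ[ℝ] ℂ)
  have hinj : Function.Injective toℂ :=
    Submodule.map_injective_of_injective e.symm.injective
  obtain ⟨g, hg⟩ := Complex.exists_isometryEquiv_mem_of_finrank_eq_one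
    (ℓ₁ := toℂ ℓ₁) (ℓ₂ := toℂ ℓ₂) (ℓ₃ := toℂ ℓ₃)
    (by rwa [LinearEquiv.finrank_map_eq]) (by rwa [LinearEquiv.finrank_map_eq])
    (by rwa [LinearEquiv.finrank_map_eq])
    (fun h ↦ hne ⟨hinj h.1, hinj h.2⟩) (e.symm z₁) (e.symm z₂) (e.symm z₃)
  refine ⟨e.symm.toIsometryEquiv.trans (g.trans e.toIsometryEquiv), ?_⟩
  simpa [toℂ, Submodule.mem_map_equiv] using hg
end

section
/- Let $q_1, q_2, q_3$ be pairwise distinct unit vectors in $\mathbb{R}^n$ ($n \ge 2$) and let $\mathfrak{p}_i \subset \mathfrak{so}(n,1)$ be the stabilizer of the isotropic line $\mathbb{R}(q_i, 1)$ for $i=1,2,3$. Then $\dim(\mathfrak{p}_1 \cap \mathfrak{p}_2 \cap \mathfrak{p}_3) = \tfrac12(n^2 - 5n + 6)$. -/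
/-!
If `(A, b)` stabilizes the lines through `(qᵢ, 1)` and `(qⱼ, 1)`, pairing the defining equation
for `qᵢ` with `qⱼ` and vice versa and using that `A` is skew gives
`(b ⬝ᵥ qᵢ + b ⬝ᵥ qⱼ) (qᵢ ⬝ᵥ qⱼ - 1) = 0`; for three distinct unit vectors this forces
`b ⬝ᵥ qᵢ = 0`, hence `A qᵢ = -b` for all `i`. So the triple intersection is the graph of
`A ↦ -A q₁` over the skew matrices killing `W = span {q₁ - q₂, q₁ - q₃}`. Three distinct points
of the sphere are never collinear, so `dim W = 2`. If `C` is a surjection with kernel `W` onto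
`ℝⁿ⁻²`, the skew matrices killing `W` are exactly the congruences `Cᵀ M C` of skew
`(n - 2) × (n - 2)` matrices `M`, a space of dimension `(n - 2).choose 2`.
-/

open Matrix

/-- The minimal parabolic subalgebra of `𝔰𝔬(n,1)`, realized as the space of pairs
`(A, b)` with `A` antisymmetric and `A q + b = (b ⬝ᵥ q) q`, sitting inside
`Matrix (Fin n) (Fin n) ℝ × (Fin n → ℝ)`. -/
def parabolic (n : ℕ) (q : Fin n → ℝ) :
    Submodule ℝ (Matrix (Fin n) (Fin n) ℝ × (Fin n → ℝ)) where
  carrier := {p | p.1ᵀ = -p.1 ∧ p.1.mulVec q + p.2 = (p.2 ⬝ᵥ q) • q}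
  zero_mem' := by simp
  add_mem' := by
    rintro ⟨A, b⟩ ⟨A', b'⟩ ⟨h1, h2⟩ ⟨h1', h2'⟩
    refine ⟨by simp only [Prod.fst_add, Matrix.transpose_add, h1, h1', neg_add], ?_⟩
    simp only [Prod.fst_add, Prod.snd_add, Matrix.add_mulVec, add_dotProduct, add_smul,
      ← h2, ← h2']
    abel
  smul_mem' := by
    rintro c ⟨A, b⟩ ⟨h1, h2⟩
    refine ⟨by simp [Matrix.transpose_smul, h1], ?_⟩
    simp only [Prod.smul_fst, Prod.smul_snd, Matrix.smul_mulVec, smul_dotProduct,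
      smul_smul, ← smul_add, h2]
    simp [smul_eq_mul]

open LieAlgebra.Orthogonal Module

namespace Matrix

attribute [local instance] LieRing.ofAssociativeRing

variable {K ι : Type*} [Field K]

theorem ext_of_transpose_eq_neg [LinearOrder ι] [CharZero K] {A B : Matrix ι ι K}
    (hA : Aᵀ = -A) (hB : Bᵀ = -B) (h : ∀ i j, i < j → A i j = B i j) : A = B := by
  have hA' : ∀ i j, A j i = -A i j := fun i j => by simpa using congrFun (congrFun hA i) j
  have hB' : ∀ i j, B j i = -B i j := fun i j => by simpa using congrFun (congrFun hB i) j
  ext i j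
  rcases lt_trichotomy i j with hij | rfl | hij
  · exact h i j hij
  · rw [self_eq_neg.mp (hA' i i), self_eq_neg.mp (hB' i i)]
  · rw [hA', hB', h j i hij]

def skewOfUpper [LinearOrder ι] (c : {p : ι × ι // p.1 < p.2} → K) : Matrix ι ι K :=
  of fun i j => if h : i < j then c ⟨(i, j), h⟩ else if h' : j < i then -c ⟨(j, i), h'⟩ else 0

theorem transpose_skewOfUpper [LinearOrder ι] (c : {p : ι × ι // p.1 < p.2} → K) :
    (skewOfUpper c)ᵀ = -skewOfUpper c := by
  ext i j
  simp only [skewOfUpper, transpose_apply, neg_apply, of_apply]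
  rcases lt_trichotomy i j with hij | rfl | hij
  · simp [hij, hij.not_gt]
  · simp
  · simp [hij, hij.not_gt]

theorem skewOfUpper_apply_of_lt [LinearOrder ι] (c : {p : ι × ι // p.1 < p.2} → K) {i j : ι}
    (h : i < j) : skewOfUpper c i j = c ⟨(i, j), h⟩ := by
  simp [skewOfUpper, h]

theorem finrank_so [Fintype ι] [LinearOrder ι] [CharZero K] :
    finrank K (so ι K) = (Fintype.card ι).choose 2 := by
  let f : (so ι K).toSubmodule →ₗ[K] ({p : ι × ι // p.1 < p.2} → K) :=
    LinearMap.pi fun p => (entryLinearMap K K p.1.1 p.1.2).comp (so ι K).toSubmodule.subtype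
  have hf : Function.Bijective f := by
    refine ⟨fun A B hAB => Subtype.ext ?_, fun c => ?_⟩
    · refine ext_of_transpose_eq_neg ((mem_so _ _ _).mp A.2) ((mem_so _ _ _).mp B.2)
        fun i j hij => congrFun hAB ⟨(i, j), hij⟩
    · refine ⟨⟨skewOfUpper c, (mem_so _ _ _).mpr (transpose_skewOfUpper c)⟩, funext fun p => ?_⟩
      exact skewOfUpper_apply_of_lt c p.2
  rw [show finrank K (so ι K) = finrank K (so ι K).toSubmodule from rfl,
    (LinearEquiv.ofBijective f hf).finrank_eq, finrank_fintype_fun_eq_card,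
    Fintype.card_subtype, Fintype.card_product_filter_lt]

variable {m n : Type*} [Fintype m]

def congruence (C : Matrix m n K) : Matrix m m K →ₗ[K] Matrix n n K where
  toFun M := Cᵀ * M * C
  map_add' M N := by rw [Matrix.mul_add, Matrix.add_mul]
  map_smul' c M := by rw [Matrix.mul_smul, Matrix.smul_mul, RingHom.id_apply]

theorem congruence_apply (C : Matrix m n K) (M : Matrix m m K) :
    congruence C M = Cᵀ * M * C := rfl

variable [Fintype n]

theorem congruence_mem_so [DecidableEq m] [DecidableEq n] (C : Matrix m n K) {M : Matrix m m K}
    (hM : M ∈ so m K) : congruence C M ∈ so n K := by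
  rw [mem_so] at hM ⊢
  rw [congruence_apply, transpose_mul, transpose_mul, transpose_transpose, hM,
    Matrix.neg_mul, Matrix.mul_neg, Matrix.mul_assoc]

theorem congruence_injective [DecidableEq m] {C : Matrix m n K} {D : Matrix n m K}
    (hCD : C * D = 1) : Function.Injective (congruence C) := by
  have hleft : ∀ M, Dᵀ * congruence C M * D = M := fun M => by
    rw [congruence_apply, show Dᵀ * (Cᵀ * M * C) * D = (C * D)ᵀ * M * (C * D) by
      simp only [transpose_mul, Matrix.mul_assoc], hCD, transpose_one, Matrix.one_mul,
      Matrix.mul_one]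
  exact fun M N h => by rw [← hleft M, h, hleft N]

def skewAnnihilator (W : Submodule K (n → K)) : Submodule K (Matrix n n K) where
  carrier := {A | Aᵀ = -A ∧ ∀ w ∈ W, A *ᵥ w = 0}
  zero_mem' := by simp
  add_mem' := by
    rintro A B ⟨hA, hAW⟩ ⟨hB, hBW⟩
    exact ⟨by rw [transpose_add, hA, hB, neg_add], fun w hw => by
      rw [add_mulVec, hAW w hw, hBW w hw, add_zero]⟩
  smul_mem' := by
    rintro c A ⟨hA, hAW⟩
    exact ⟨by rw [transpose_smul, hA, smul_neg], fun w hw => by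
      rw [smul_mulVec, hAW w hw, smul_zero]⟩

theorem mem_skewAnnihilator {W : Submodule K (n → K)} {A : Matrix n n K} :
    A ∈ skewAnnihilator W ↔ Aᵀ = -A ∧ ∀ w ∈ W, A *ᵥ w = 0 := Iff.rfl

theorem skewAnnihilator_eq_map [DecidableEq m] [DecidableEq n] {W : Submodule K (n → K)}
    {C : Matrix m n K} {D : Matrix n m K} (hCD : C * D = 1)
    (hker : ∀ x, C *ᵥ x = 0 ↔ x ∈ W) :
    skewAnnihilator W = (so m K).toSubmodule.map (congruence C) := by
  apply le_antisymm
  · rintro A ⟨hA, hAW⟩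
    have hDC : A * (D * C) = A := by
      refine (toLin' (R := K)).injective (LinearMap.ext fun x => ?_)
      have hx : D *ᵥ (C *ᵥ x) - x ∈ W := by
        rw [← hker, mulVec_sub, mulVec_mulVec, hCD, one_mulVec, sub_self]
      rw [toLin'_apply, toLin'_apply, ← mulVec_mulVec, ← mulVec_mulVec, ← sub_eq_zero,
        ← mulVec_sub, hAW _ hx]
    have hCD' : (D * C)ᵀ * A = A := by
      rw [← neg_neg A, Matrix.mul_neg, ← hA, ← transpose_mul, hDC]
    refine ⟨congruence D A, congruence_mem_so D ((mem_so _ _ _).mpr hA), ?_⟩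
    rw [congruence_apply, congruence_apply]
    calc Cᵀ * (Dᵀ * A * D) * C = (D * C)ᵀ * (A * (D * C)) := by
          simp only [transpose_mul, Matrix.mul_assoc]
      _ = A := by rw [hDC, hCD']
  · rintro _ ⟨M, hM, rfl⟩
    refine ⟨(mem_so _ _ _).mp (congruence_mem_so C hM), fun w hw => ?_⟩
    rw [congruence_apply, ← mulVec_mulVec, (hker w).mpr hw, mulVec_zero]

theorem exists_mul_eq_one_and_mulVec_eq_zero_iff [DecidableEq n] (W : Submodule K (n → K)) :
    ∃ (C : Matrix (Fin (Fintype.card n - finrank K W)) n K)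
      (D : Matrix n (Fin (Fintype.card n - finrank K W)) K),
      C * D = 1 ∧ ∀ x, C *ᵥ x = 0 ↔ x ∈ W := by
  let e : ((n → K) ⧸ W) ≃ₗ[K] (Fin (Fintype.card n - finrank K W) → K) :=
    LinearEquiv.ofFinrankEq _ _ (by simp [Submodule.finrank_quotient])
  let π := e.toLinearMap ∘ₗ W.mkQ
  obtain ⟨σ, hσ⟩ := π.exists_rightInverse_of_surjective
    (LinearMap.range_eq_top.mpr (e.surjective.comp W.mkQ_surjective))
  refine ⟨LinearMap.toMatrix' π, LinearMap.toMatrix' σ, ?_, fun x => ?_⟩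
  · rw [← LinearMap.toMatrix'_comp, hσ, LinearMap.toMatrix'_id]
  · rw [LinearMap.toMatrix'_mulVec, LinearMap.comp_apply, LinearEquiv.coe_coe,
      e.map_eq_zero_iff, Submodule.mkQ_apply, Submodule.Quotient.mk_eq_zero]

theorem mem_skewAnnihilator_span {s : Set (n → K)} {A : Matrix n n K} :
    A ∈ skewAnnihilator (Submodule.span K s) ↔ Aᵀ = -A ∧ ∀ w ∈ s, A *ᵥ w = 0 := by
  rw [mem_skewAnnihilator]
  exact and_congr_right' (Submodule.span_le (p := LinearMap.ker A.mulVecLin))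

theorem finrank_skewAnnihilator [CharZero K] [DecidableEq n] (W : Submodule K (n → K)) :
    finrank K (skewAnnihilator W) = (Fintype.card n - finrank K W).choose 2 := by
  obtain ⟨C, D, hCD, hker⟩ := exists_mul_eq_one_and_mulVec_eq_zero_iff W
  rw [skewAnnihilator_eq_map hCD hker,
    ← (Submodule.equivMapOfInjective _ (congruence_injective hCD) _).finrank_eq]
  exact (finrank_so (ι := Fin _)).trans (by rw [Fintype.card_fin])

end Matrix

theorem Matrix.dotProduct_mulVec_of_transpose_eq_neg {R ι : Type*} [CommRing R] [Fintype ι]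
    {A : Matrix ι ι R} (hA : Aᵀ = -A) (x y : ι → R) : x ⬝ᵥ A *ᵥ y = -(y ⬝ᵥ A *ᵥ x) := by
  rw [dotProduct_mulVec, ← mulVec_transpose, hA, neg_mulVec, neg_dotProduct, dotProduct_comm]

theorem Matrix.dotProduct_mulVec_self_of_transpose_eq_neg {R ι : Type*} [CommRing R]
    [IsAddTorsionFree R] [Fintype ι] {A : Matrix ι ι R} (hA : Aᵀ = -A) (x : ι → R) :
    x ⬝ᵥ A *ᵥ x = 0 :=
  self_eq_neg.mp (dotProduct_mulVec_of_transpose_eq_neg hA x x)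

section UnitVectors

variable {ι : Type*} [Fintype ι] {q q' : ι → ℝ}

theorem dotProduct_ne_one_of_ne (hq : q ⬝ᵥ q = 1) (hq' : q' ⬝ᵥ q' = 1) (h : q ≠ q') :
    q ⬝ᵥ q' ≠ 1 := by
  intro h1
  apply sub_ne_zero.mpr h
  rw [← dotProduct_self_eq_zero, sub_dotProduct, dotProduct_sub, dotProduct_sub, hq, hq',
    dotProduct_comm q' q, h1]
  norm_num

/-- The line through `q` and `q'` meets the unit sphere only at `q` and `q'`. -/
theorem eq_zero_or_eq_one_of_sub_smul_sub (hq : q ⬝ᵥ q = 1) (hq' : q' ⬝ᵥ q' = 1) (h : q ≠ q')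
    {a : ℝ} (ha : (q - a • (q - q')) ⬝ᵥ (q - a • (q - q')) = 1) : a = 0 ∨ a = 1 := by
  set d := q - q'
  have hd : d ⬝ᵥ d ≠ 0 := fun h0 => h (sub_eq_zero.mp (dotProduct_self_eq_zero.mp h0))
  rw [show q' = q - d by simp [d]] at hq'
  simp only [sub_dotProduct, dotProduct_sub, smul_dotProduct, dotProduct_smul, smul_eq_mul,
    dotProduct_comm d q] at ha hq'
  have : a * (a - 1) * (d ⬝ᵥ d) = 0 := by linear_combination ha - a * hq' + (a - 1) * hq
  rcases mul_eq_zero.mp ((mul_eq_zero.mp this).resolve_right hd) with h0 | h1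
  · exact .inl h0
  · exact .inr (sub_eq_zero.mp h1)

theorem linearIndependent_sub_sub {q₁ q₂ q₃ : ι → ℝ} (hq₁ : q₁ ⬝ᵥ q₁ = 1) (hq₂ : q₂ ⬝ᵥ q₂ = 1)
    (hq₃ : q₃ ⬝ᵥ q₃ = 1) (h12 : q₁ ≠ q₂) (h13 : q₁ ≠ q₃) (h23 : q₂ ≠ q₃) :
    LinearIndependent ℝ ![q₁ - q₂, q₁ - q₃] := by
  rw [LinearIndependent.pair_iff' (sub_ne_zero.mpr h12)]
  intro a ha
  have hq₃' : q₃ = q₁ - a • (q₁ - q₂) := by rw [ha, sub_sub_cancel]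
  rcases eq_zero_or_eq_one_of_sub_smul_sub hq₁ hq₂ h12 (hq₃' ▸ hq₃) with rfl | rfl
  · exact h13 (by simpa using hq₃'.symm)
  · exact h23 (by simpa using hq₃'.symm)

end UnitVectors

section Parabolic

variable {n : ℕ}

theorem mem_parabolic {q : Fin n → ℝ} {p : Matrix (Fin n) (Fin n) ℝ × (Fin n → ℝ)} :
    p ∈ parabolic n q ↔ p.1ᵀ = -p.1 ∧ p.1 *ᵥ q + p.2 = (p.2 ⬝ᵥ q) • q := Iff.rfl

theorem dotProduct_add_dotProduct_eq_zero_of_mem_parabolic {q q' : Fin n → ℝ}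
    (hq : q ⬝ᵥ q = 1) (hq' : q' ⬝ᵥ q' = 1) (h : q ≠ q')
    {p : Matrix (Fin n) (Fin n) ℝ × (Fin n → ℝ)} (hp : p ∈ parabolic n q)
    (hp' : p ∈ parabolic n q') : p.2 ⬝ᵥ q + p.2 ⬝ᵥ q' = 0 := by
  obtain ⟨hA, e⟩ := hp
  obtain ⟨-, e'⟩ := hp'
  have e₁ := congrArg (q' ⬝ᵥ ·) e
  have e₂ := congrArg (q ⬝ᵥ ·) e'
  have hskew := dotProduct_mulVec_of_transpose_eq_neg hA q q'
  simp only [dotProduct_add, dotProduct_smul, smul_eq_mul, dotProduct_comm q' q,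
    dotProduct_comm q p.2, dotProduct_comm q' p.2] at e₁ e₂
  have : (p.2 ⬝ᵥ q + p.2 ⬝ᵥ q') * (q ⬝ᵥ q' - 1) = 0 := by
    linear_combination hskew - e₁ - e₂
  exact (mul_eq_zero.mp this).resolve_right (sub_ne_zero.mpr (dotProduct_ne_one_of_ne hq hq' h))

def graphNegMulVec (q : Fin n → ℝ) :
    Matrix (Fin n) (Fin n) ℝ →ₗ[ℝ] Matrix (Fin n) (Fin n) ℝ × (Fin n → ℝ) :=
  LinearMap.prod LinearMap.id (-(LinearMap.applyₗ q ∘ₗ Matrix.toLin'.toLinearMap))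

theorem graphNegMulVec_apply (q : Fin n → ℝ) (A : Matrix (Fin n) (Fin n) ℝ) :
    graphNegMulVec q A = (A, -(A *ᵥ q)) := rfl

theorem graphNegMulVec_injective (q : Fin n → ℝ) : Function.Injective (graphNegMulVec q) :=
  fun _ _ h => congrArg Prod.fst h

theorem graphNegMulVec_mem_parabolic {q q' : Fin n → ℝ} {A : Matrix (Fin n) (Fin n) ℝ}
    (hA : Aᵀ = -A) (h : A *ᵥ q' = A *ᵥ q) : graphNegMulVec q A ∈ parabolic n q' := by
  rw [graphNegMulVec_apply, mem_parabolic, ← h, add_neg_cancel, neg_dotProduct,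
    dotProduct_comm, dotProduct_mulVec_self_of_transpose_eq_neg hA, neg_zero, zero_smul]
  exact ⟨hA, rfl⟩

theorem mulVec_eq_neg_of_mem_parabolic {q : Fin n → ℝ}
    {p : Matrix (Fin n) (Fin n) ℝ × (Fin n → ℝ)} (hp : p ∈ parabolic n q) (h : p.2 ⬝ᵥ q = 0) :
    p.1 *ᵥ q = -p.2 := by
  rw [← add_eq_zero_iff_eq_neg, hp.2, h, zero_smul]

theorem parabolic_inf_inf_eq_map {q₁ q₂ q₃ : Fin n → ℝ} (hq₁ : q₁ ⬝ᵥ q₁ = 1)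
    (hq₂ : q₂ ⬝ᵥ q₂ = 1) (hq₃ : q₃ ⬝ᵥ q₃ = 1) (h12 : q₁ ≠ q₂) (h13 : q₁ ≠ q₃) (h23 : q₂ ≠ q₃) :
    parabolic n q₁ ⊓ parabolic n q₂ ⊓ parabolic n q₃ =
      (Matrix.skewAnnihilator (Submodule.span ℝ {q₁ - q₂, q₁ - q₃})).map (graphNegMulVec q₁) := by
  apply le_antisymm
  · rintro p ⟨⟨h₁, h₂⟩, h₃⟩
    have k₁₂ := dotProduct_add_dotProduct_eq_zero_of_mem_parabolic hq₁ hq₂ h12 h₁ h₂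
    have k₁₃ := dotProduct_add_dotProduct_eq_zero_of_mem_parabolic hq₁ hq₃ h13 h₁ h₃
    have k₂₃ := dotProduct_add_dotProduct_eq_zero_of_mem_parabolic hq₂ hq₃ h23 h₂ h₃
    have e₁ := mulVec_eq_neg_of_mem_parabolic h₁ (by linarith)
    have e₂ := mulVec_eq_neg_of_mem_parabolic h₂ (by linarith)
    have e₃ := mulVec_eq_neg_of_mem_parabolic h₃ (by linarith)
    refine ⟨p.1, Matrix.mem_skewAnnihilator_span.mpr ⟨h₁.1, ?_⟩, ?_⟩
    · rintro w (rfl | rfl)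
      · rw [mulVec_sub, e₁, e₂, sub_self]
      · rw [mulVec_sub, e₁, e₃, sub_self]
    · rw [graphNegMulVec_apply, e₁, neg_neg]
  · rintro _ ⟨A, hA, rfl⟩
    obtain ⟨hA, hAW⟩ := Matrix.mem_skewAnnihilator_span.mp hA
    have h₂ := hAW _ (Set.mem_insert _ _)
    have h₃ := hAW _ (Set.mem_insert_of_mem _ rfl)
    rw [mulVec_sub, sub_eq_zero] at h₂ h₃
    exact ⟨⟨graphNegMulVec_mem_parabolic hA rfl, graphNegMulVec_mem_parabolic hA h₂.symm⟩,
      graphNegMulVec_mem_parabolic hA h₃.symm⟩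

end Parabolic

theorem finrank_span_pair {K V : Type*} [DivisionRing K] [AddCommGroup V] [Module K V] {u v : V}
    (h : LinearIndependent K ![u, v]) : finrank K (Submodule.span K {u, v}) = 2 := by
  rw [← Matrix.range_cons_cons_empty u v ![], finrank_span_eq_card h, Fintype.card_fin]

theorem two_mul_choose_two_sub_two {n : ℕ} (hn : 2 ≤ n) :
    2 * (n - 2).choose 2 + 5 * n = n ^ 2 + 6 := by
  obtain ⟨m, rfl⟩ := Nat.exists_eq_add_of_le hn
  rw [Nat.add_sub_cancel_left, Nat.choose_two_right,
    Nat.mul_div_cancel' (Nat.even_mul_pred_self m).two_dvd]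
  rcases m with _ | m
  · rfl
  · rw [Nat.add_sub_cancel]
    ring

theorem stmt9_general {n : ℕ} (q₁ q₂ q₃ : Fin n → ℝ)
    (hq₁ : q₁ ⬝ᵥ q₁ = 1) (hq₂ : q₂ ⬝ᵥ q₂ = 1) (hq₃ : q₃ ⬝ᵥ q₃ = 1)
    (h12 : q₁ ≠ q₂) (h13 : q₁ ≠ q₃) (h23 : q₂ ≠ q₃) :
    2 * Module.finrank ℝ ↥(parabolic n q₁ ⊓ parabolic n q₂ ⊓ parabolic n q₃) + 5 * n
      = n ^ 2 + 6 := by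
  have hli := linearIndependent_sub_sub hq₁ hq₂ hq₃ h12 h13 h23
  have hn : 2 ≤ n := by simpa using hli.fintype_card_le_finrank
  rw [parabolic_inf_inf_eq_map hq₁ hq₂ hq₃ h12 h13 h23,
    ← (Submodule.equivMapOfInjective _ (graphNegMulVec_injective q₁) _).finrank_eq,
    Matrix.finrank_skewAnnihilator, finrank_span_pair hli, Fintype.card_fin]
  exact two_mul_choose_two_sub_two hn

/-- For pairwise distinct unit vectors `q₁, q₂, q₃` in `ℝⁿ` (`n ≥ 2`), the triple
intersection of the corresponding minimal parabolic subalgebras of `𝔰𝔬(n,1)` has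
dimension `(n² - 5n + 6)/2`. -/
theorem stmt9 {n : ℕ} (hn : 2 ≤ n) (q₁ q₂ q₃ : Fin n → ℝ)
    (hq₁ : q₁ ⬝ᵥ q₁ = 1) (hq₂ : q₂ ⬝ᵥ q₂ = 1) (hq₃ : q₃ ⬝ᵥ q₃ = 1)
    (h12 : q₁ ≠ q₂) (h13 : q₁ ≠ q₃) (h23 : q₂ ≠ q₃) :
    2 * Module.finrank ℝ ↥(parabolic n q₁ ⊓ parabolic n q₂ ⊓ parabolic n q₃) + 5 * n
      = n ^ 2 + 6 :=
  stmt9_general q₁ q₂ q₃ hq₁ hq₂ hq₃ h12 h13 h23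
end

section
/- Let $q_1, q_2, q_3$ be pairwise distinct unit vectors in $\mathbb{R}^n$ that are linearly dependent, and let $X = \begin{pmatrix} A & b \\ b^t & 0 \end{pmatrix} \in \mathfrak{so}(n,1)$ satisfy $Aq_i + b = (b\cdot q_i)q_i$ for $i = 1, 2, 3$. Then $b = 0$. -/
/-!
Pairing the equation at `qᵢ` with `qⱼ` and the one at `qⱼ` with `qᵢ`, the antisymmetry of `A`
leaves `(b·qᵢ + b·qⱼ)(1 - qᵢ·qⱼ) = 0`, and `qᵢ·qⱼ ≠ 1` for distinct unit vectors. So the three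
numbers `b·qᵢ` are pairwise opposite, hence zero, and `Aqᵢ = -b`. Three distinct points of a sphere
are affinely independent, so a nontrivial relation `∑ gᵢ qᵢ = 0` has `∑ gᵢ ≠ 0`; applying `A` to it
gives `(∑ gᵢ) b = 0`.
-/

open Matrix

section Skew

variable {m R : Type*} [Fintype m] [CommRing R]

lemma dotProduct_mulVec_eq_neg_of_transpose_eq_neg {A : Matrix m m R} (hA : Aᵀ = -A)
    (x y : m → R) : x ⬝ᵥ A *ᵥ y = -(y ⬝ᵥ A *ᵥ x) := by
  rw [dotProduct_mulVec, ← mulVec_transpose, hA, neg_mulVec, neg_dotProduct, dotProduct_comm]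

lemma add_dotProduct_mul_dotProduct_eq {A : Matrix m m R} (hA : Aᵀ = -A) {b u v : m → R}
    (hu : A *ᵥ u + b = (b ⬝ᵥ u) • u) (hv : A *ᵥ v + b = (b ⬝ᵥ v) • v) :
    (b ⬝ᵥ u + b ⬝ᵥ v) * (u ⬝ᵥ v) = b ⬝ᵥ u + b ⬝ᵥ v := by
  have eu := congrArg (v ⬝ᵥ ·) hu
  have ev := congrArg (u ⬝ᵥ ·) hv
  simp only [dotProduct_add, dotProduct_smul, smul_eq_mul] at eu ev
  rw [dotProduct_mulVec_eq_neg_of_transpose_eq_neg hA, dotProduct_comm v b,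
    dotProduct_comm v u] at eu
  rw [dotProduct_comm u b] at ev
  linear_combination -eu - ev

lemma sum_smul_eq_zero_of_mulVec_add_eq_zero {ι : Type*} [Fintype ι] {A : Matrix m m R}
    {b : m → R} {p : ι → m → R} (hp : ∀ i, A *ᵥ p i + b = 0) {g : ι → R}
    (hg : ∑ i, g i • p i = 0) : (∑ i, g i) • b = 0 := by
  have := congrArg (A *ᵥ ·) hg
  simp only [mulVec_sum, mulVec_smul, eq_neg_of_add_eq_zero_left (hp _), mulVec_zero,
    smul_neg, Finset.sum_neg_distrib, neg_eq_zero] at this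
  rw [Finset.sum_smul, this]

end Skew

section UnitVectors

variable {m : Type*} [Fintype m]

lemma dotProduct_ne_one_of_ne_s11 {u v : m → ℝ} (hu : u ⬝ᵥ u = 1) (hv : v ⬝ᵥ v = 1) (huv : u ≠ v) :
    u ⬝ᵥ v ≠ 1 := by
  intro h
  have : (u - v) ⬝ᵥ (u - v) = 0 := by
    rw [sub_dotProduct, dotProduct_sub, dotProduct_sub, hu, hv, dotProduct_comm v u, h]
    ring
  exact huv (sub_eq_zero.mp (dotProduct_self_eq_zero.mp this))

lemma add_dotProduct_eq_zero_of_transpose_eq_neg {A : Matrix m m ℝ} (hA : Aᵀ = -A)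
    {b u v : m → ℝ} (hu₁ : u ⬝ᵥ u = 1) (hv₁ : v ⬝ᵥ v = 1) (huv : u ≠ v)
    (hu : A *ᵥ u + b = (b ⬝ᵥ u) • u) (hv : A *ᵥ v + b = (b ⬝ᵥ v) • v) :
    b ⬝ᵥ u + b ⬝ᵥ v = 0 := by
  have h : (b ⬝ᵥ u + b ⬝ᵥ v) * (u ⬝ᵥ v - 1) = 0 := by
    linear_combination add_dotProduct_mul_dotProduct_eq hA hu hv
  exact (mul_eq_zero.mp h).resolve_right (sub_ne_zero.mpr (dotProduct_ne_one_of_ne_s11 hu₁ hv₁ huv))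

lemma affineIndependent_of_dotProduct_self_eq_one {p : Fin 3 → m → ℝ}
    (hp : ∀ i, p i ⬝ᵥ p i = 1) (hinj : Function.Injective p) : AffineIndependent ℝ p := by
  let e := (WithLp.linearEquiv 2 ℝ (m → ℝ)).symm
  have hsphere : Set.range (e ∘ p) ⊆ Metric.sphere 0 1 := by
    rintro _ ⟨i, rfl⟩
    rw [mem_sphere_zero_iff_norm, ← sq_eq_sq₀ (norm_nonneg _) zero_le_one, one_pow,
      ← real_inner_self_eq_norm_sq, EuclideanSpace.inner_eq_star_dotProduct]
    exact hp i
  exact ((EuclideanGeometry.Sphere.cospherical ⟨0, 1⟩).affineIndependent hsphere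
    (e.injective.comp hinj)).of_comp e.toLinearMap.toAffineMap

end UnitVectors

lemma AffineIndependent.exists_sum_smul_eq_zero_of_not_linearIndependent {k V ι : Type*} [Ring k]
    [AddCommGroup V] [Module k V] [Fintype ι] {p : ι → V} (ha : AffineIndependent k p)
    (hl : ¬LinearIndependent k p) : ∃ g : ι → k, ∑ i, g i • p i = 0 ∧ ∑ i, g i ≠ 0 := by
  obtain ⟨g, hg, i, hgi⟩ := Fintype.not_linearIndependent_iff.mp hl
  exact ⟨g, hg, fun hsum => hgi (ha.eq_zero_of_sum_eq_zero hsum hg i (Finset.mem_univ i))⟩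

/-- If `q₁, q₂, q₃` are pairwise distinct unit vectors which are linearly dependent,
`A` is antisymmetric and `Aqᵢ + b = (b·qᵢ)qᵢ` for `i = 1, 2, 3`, then `b = 0`. -/
theorem stmt11 {n : ℕ} (q₁ q₂ q₃ : Fin n → ℝ)
    (hq₁ : q₁ ⬝ᵥ q₁ = 1) (hq₂ : q₂ ⬝ᵥ q₂ = 1) (hq₃ : q₃ ⬝ᵥ q₃ = 1)
    (h12 : q₁ ≠ q₂) (h13 : q₁ ≠ q₃) (h23 : q₂ ≠ q₃)
    (hdep : ¬ LinearIndependent ℝ ![q₁, q₂, q₃])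
    (A : Matrix (Fin n) (Fin n) ℝ) (hA : Aᵀ = -A) (b : Fin n → ℝ)
    (h1 : A.mulVec q₁ + b = (b ⬝ᵥ q₁) • q₁)
    (h2 : A.mulVec q₂ + b = (b ⬝ᵥ q₂) • q₂)
    (h3 : A.mulVec q₃ + b = (b ⬝ᵥ q₃) • q₃) :
    b = 0 := by
  have s12 := add_dotProduct_eq_zero_of_transpose_eq_neg hA hq₁ hq₂ h12 h1 h2
  have s13 := add_dotProduct_eq_zero_of_transpose_eq_neg hA hq₁ hq₃ h13 h1 h3
  have s23 := add_dotProduct_eq_zero_of_transpose_eq_neg hA hq₂ hq₃ h23 h2 h3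
  obtain ⟨hb₁, hb₂, hb₃⟩ : b ⬝ᵥ q₁ = 0 ∧ b ⬝ᵥ q₂ = 0 ∧ b ⬝ᵥ q₃ = 0 := by
    refine ⟨?_, ?_, ?_⟩ <;> linarith
  have hAq : ∀ i, A *ᵥ ![q₁, q₂, q₃] i + b = 0 := by
    intro i
    fin_cases i <;> simp [h1, h2, h3, hb₁, hb₂, hb₃]
  have hind : AffineIndependent ℝ ![q₁, q₂, q₃] :=
    affineIndependent_of_dotProduct_self_eq_one (by simp [Fin.forall_fin_succ, hq₁, hq₂, hq₃])
      (by simp only [vecCons, Fin.cons_injective_iff]; simp [Function.Injective, h12, h13, h23])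
  obtain ⟨g, hg, hsum⟩ := hind.exists_sum_smul_eq_zero_of_not_linearIndependent hdep
  exact (smul_eq_zero.mp (sum_smul_eq_zero_of_mulVec_add_eq_zero hAq hg)).resolve_left hsum
end
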